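/- arXiv:2503.11860 — 5 statements merged into one kernel-verified Lean document; each statement's English description precedes it below -/
import Mathlib

section
/- Let n ≥ 2 and let f : ℝⁿ → ℝ be a smooth function of variables (x₁,…,x_{n-1}, y) with f_y ≠ 0. Define the n×n matrix L whose first n-2 rows are rows of a companion-type matrix (row i has -xᵢ in column 1 and 1 in column i+1, zeros elsewhere), whose (n-1)-st row is (-x_{n-1} + f_{x₁}, f_{x₂}, …, f_{x_{n-1}}, f_y), and whose n-th row is ((x₁f_{x₁} + ⋯ + x_{n-1}f_{x_{n-1}} - f_{x₁}f_{x_{n-1}} - f)/f_y, -(f_{x₁} + f_{x₂}f_{x_{n-1}})/f_y, …, -(f_{x_{n-2}} + f_{x_{n-1}}²)/f_y, -f_{x_{n-1}}). Let J be the Jacobian matrix of (x₁,…,x_{n-1}, f), i.e. the identity in the first n-1 rows with last row (f_{x₁},…,f_{x_{n-1}}, f_y), and let L̃ be the companion matrix with first column (-x₁,…,-x_{n-1},-f) and superdiagonal 1's. Then J·L = L̃·J. -/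
open Matrix Finset

/-- Auxiliary: the entries of row `m+1` of `J * L`, as a function of the column index. -/
noncomputable def rowExpr (m : ℕ) (P D : ℕ → ℝ) (fp : ℝ) (jv v : ℕ) : ℝ :=
  D v * (if v < m then (if jv = 0 then -P v else if jv = v + 1 then 1 else 0)
    else if v = m then (if jv = 0 then -P m + D 0 else D jv)
    else (if jv = 0 then
        ((∑ k ∈ Finset.range (m + 1), P k * D k) - D 0 * D m - fp) / D (m + 1)
      else if jv = m + 1 then -D m
      else -(D (jv - 1) + D jv * D m) / D (m + 1)))

lemma rowExpr_sum (m : ℕ) (P D : ℕ → ℝ) (fp : ℝ) (hD : D (m + 1) ≠ 0)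
    (jv : ℕ) (hjv : jv < m + 2) :
    ∑ v ∈ Finset.range (m + 2), rowExpr m P D fp jv v
      = if jv = 0 then -fp else 0 := by
  rw [Finset.sum_range_succ, Finset.sum_range_succ]
  have hm : rowExpr m P D fp jv m
      = D m * (if jv = 0 then -P m + D 0 else D jv) := by
    simp [rowExpr]
  have hm1 : rowExpr m P D fp jv (m + 1)
      = D (m + 1) * (if jv = 0 then
          ((∑ k ∈ Finset.range (m + 1), P k * D k) - D 0 * D m - fp) / D (m + 1)
        else if jv = m + 1 then -D m
        else -(D (jv - 1) + D jv * D m) / D (m + 1)) := by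
    simp [rowExpr]
  rw [hm, hm1]
  by_cases hj : jv = 0
  · have h1 : ∑ v ∈ Finset.range m, rowExpr m P D fp jv v
        = -∑ v ∈ Finset.range m, P v * D v := by
      rw [← Finset.sum_neg_distrib]
      refine Finset.sum_congr rfl fun v hv => ?_
      simp only [rowExpr, if_pos (Finset.mem_range.mp hv), if_pos hj]
      ring
    rw [h1, if_pos hj, if_pos hj, if_pos hj, Finset.sum_range_succ]
    field_simp
    ring
  · rw [if_neg hj, if_neg hj, if_neg hj]
    by_cases hjm : jv = m + 1
    · have h1 : ∑ v ∈ Finset.range m, rowExpr m P D fp jv v = 0 := by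
        refine Finset.sum_eq_zero fun v hv => ?_
        have hv' := Finset.mem_range.mp hv
        simp only [rowExpr, if_pos hv', if_neg hj,
          if_neg (by omega : ¬ jv = v + 1), mul_zero]
      rw [h1, if_pos hjm, hjm]
      ring
    · have h1 : ∑ v ∈ Finset.range m, rowExpr m P D fp jv v = D (jv - 1) := by
        rw [Finset.sum_eq_single_of_mem (jv - 1) (Finset.mem_range.mpr (by omega))]
        · simp only [rowExpr, if_pos (by omega : jv - 1 < m), if_neg hj,
            if_pos (by omega : jv = jv - 1 + 1), mul_one]
        · intro v hv hvne
          have hv' := Finset.mem_range.mp hv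
          simp only [rowExpr, if_pos hv', if_neg hj,
            if_neg (by omega : ¬ jv = v + 1), mul_zero]
      rw [h1, if_neg hjm]
      field_simp
      ring

/-- Theorem 1 of the paper: the explicit almost differentially nondegenerate
Nijenhuis operator `L` satisfies `J * L = L̃ * J`, where `J` is the Jacobian
matrix of `(x₁,…,x_{n-1}, f)` and `L̃` is the companion matrix. -/
theorem stmt0 (n : ℕ) (hn : 2 ≤ n)
    (f : (Fin n → ℝ) → ℝ) (hf : ContDiff ℝ (⊤ : ℕ∞) f)
    (p : Fin n → ℝ)
    -- `P k` is the `k`-th coordinate of the point, `D k` the `k`-th partial derivative of `f` there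
    (P D : ℕ → ℝ)
    (hP : ∀ k (h : k < n), P k = p ⟨k, h⟩)
    (hD : ∀ k (h : k < n), D k = fderiv ℝ f p (Pi.single (⟨k, h⟩ : Fin n) 1))
    (hfy : D (n - 1) ≠ 0)
    (L J Lt : Matrix (Fin n) (Fin n) ℝ)
    (hL : ∀ i j : Fin n, L i j =
      if i.val < n - 2 then
        (if j.val = 0 then -P i.val else if j.val = i.val + 1 then 1 else 0)
      else if i.val = n - 2 then
        (if j.val = 0 then -P (n - 2) + D 0 else D j.val)
      else
        (if j.val = 0 then
          ((∑ k ∈ Finset.range (n - 1), P k * D k) - D 0 * D (n - 2) - f p) / D (n - 1)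
        else if j.val = n - 1 then -D (n - 2)
        else -(D (j.val - 1) + D j.val * D (n - 2)) / D (n - 1)))
    (hJ : ∀ i j : Fin n, J i j =
      if i.val < n - 1 then (if i = j then 1 else 0) else D j.val)
    (hLt : ∀ i j : Fin n, Lt i j =
      if j.val = 0 then (if i.val < n - 1 then -P i.val else -(f p))
      else if j.val = i.val + 1 then 1 else 0) :
    J * L = Lt * J := by
  obtain ⟨m, rfl⟩ : ∃ m, n = m + 2 := ⟨n - 2, by omega⟩
  simp only [show m + 2 - 2 = m from rfl, show m + 2 - 1 = m + 1 from rfl] at hL hJ hLt hfy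
  ext i j
  simp only [Matrix.mul_apply]
  by_cases hi : i.val < m + 1
  · have hLHS : ∑ k, J i k * L k j = L i j := by
      rw [Finset.sum_eq_single i]
      · rw [hJ, if_pos hi, if_pos rfl, one_mul]
      · intro k _ hk
        rw [hJ, if_pos hi, if_neg (Ne.symm hk), zero_mul]
      · exact fun h => absurd (Finset.mem_univ i) h
    rw [hLHS]
    have hi1 : i.val + 1 < m + 2 := by omega
    have h0 : (0 : ℕ) < m + 2 := by omega
    have hne : (⟨0, h0⟩ : Fin (m + 2)) ≠ ⟨i.val + 1, hi1⟩ := by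
      exact Fin.ne_of_val_ne (Nat.succ_ne_zero _).symm
    have hzero : ∀ c ∈ (Finset.univ : Finset (Fin (m + 2))),
        c ≠ ⟨0, h0⟩ ∧ c ≠ ⟨i.val + 1, hi1⟩ → Lt i c * J c j = 0 := by
      intro c _ hc
      have h1 : ¬ c.val = 0 := fun h => hc.1 (Fin.ext h)
      have h2 : ¬ c.val = i.val + 1 := fun h => hc.2 (Fin.ext h)
      rw [hLt, if_neg h1, if_neg h2, zero_mul]
    rw [Finset.sum_eq_add_of_mem (⟨0, h0⟩ : Fin (m + 2)) ⟨i.val + 1, hi1⟩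
      (Finset.mem_univ _) (Finset.mem_univ _) hne hzero]
    rw [hL, hLt, hLt, hJ, hJ]
    simp only [Fin.ext_iff]
    by_cases hi2 : i.val < m
    · simp only [if_pos hi2, if_pos hi]
      split_ifs <;> first
        | ring1
        | (exfalso; omega)
        | (exfalso; exact ‹False›)
    · rw [show i.val = m from by omega]
      simp only [if_neg (lt_irrefl m), if_pos rfl, if_pos (by omega : m < m + 1)]
      split_ifs <;> first
        | ring1
        | (exfalso; omega)
        | (exfalso; exact ‹False›)
        | (rw [show (j:ℕ) = 0 from by omega]; ring1)
  · have hRHS : ∑ k, Lt i k * J k j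
        = -(f p) * (if (0 : Fin (m + 2)) = j then 1 else 0) := by
      rw [Finset.sum_eq_single (0 : Fin (m + 2))]
      · have e1 : Lt i (0 : Fin (m + 2)) = -(f p) := by
          rw [hLt]; simp [hi]
        have e2 : J (0 : Fin (m + 2)) j = if (0 : Fin (m + 2)) = j then 1 else 0 := by
          rw [hJ]
          have : ((0 : Fin (m + 2)) : ℕ) < m + 1 := by simp
          rw [if_pos this]
        rw [e1, e2]
      · intro k _ hk
        have h1 : ¬ k.val = 0 := by
          exact fun h => hk (Fin.ext (by simp [h]))
        have hk2 := k.isLt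
        rw [hLt, if_neg h1, if_neg (by omega : ¬ k.val = i.val + 1), zero_mul]
      · exact fun h => absurd (Finset.mem_univ _) h
    have hLHS : ∑ k, J i k * L k j
        = ∑ v ∈ Finset.range (m + 2), rowExpr m P D (f p) j.val v := by
      rw [← Fin.sum_univ_eq_sum_range (fun v => rowExpr m P D (f p) j.val v) (m + 2)]
      refine Finset.sum_congr rfl fun k _ => ?_
      rw [hJ, hL, if_neg hi]
      rfl
    rw [hRHS, hLHS, rowExpr_sum m P D (f p) hfy j.val j.isLt]
    by_cases hj : j.val = 0
    · rw [if_pos hj, if_pos (show (0 : Fin (m + 2)) = j from Fin.ext (by simp [hj]))]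
      ring
    · rw [if_neg hj, if_neg (show ¬ (0 : Fin (m + 2)) = j from
        fun h => hj (by rw [← h]; simp))]
      ring
end

section
/- Let n ≥ 3 and let R : ℝ^{n-1} → ℝ be a smooth function defined near the origin satisfying, on a neighborhood of 0, n·R₁ + (n-1)x₁R₂ + (n-2)x₂R₃ + ⋯ + 2x_{n-2}R_{n-1} - x_{n-1} = 0 together with R₁ = (-1)^{n-2}(R_{n-1})^{n-1}. Then no such smooth R exists (the hypotheses lead to a contradiction). -/
open Finset Filter

/-- No smooth `R` near the origin satisfies both
`nR₁ + (n-1)x₁R₂ + ⋯ + 2x_{n-2}R_{n-1} - x_{n-1} = 0` and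
`R₁ = (-1)^{n-2}(R_{n-1})^{n-1}` (`n ≥ 3`). -/
theorem stmt7 (n : ℕ) (hn : 3 ≤ n)
    (R : (Fin (n - 1) → ℝ) → ℝ) (hR : ContDiff ℝ (⊤ : ℕ∞) R)
    (D : (Fin (n - 1) → ℝ) → ℕ → ℝ)
    (hD : ∀ x k (h : k < n - 1),
      D x k = fderiv ℝ R x (Pi.single (⟨k, h⟩ : Fin (n - 1)) 1))
    (X : (Fin (n - 1) → ℝ) → ℕ → ℝ)
    (hX : ∀ x k (h : k < n - 1), X x k = x ⟨k, h⟩)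
    (heq : ∀ᶠ x in nhds (0 : Fin (n - 1) → ℝ),
      (n : ℝ) * D x 0
        + (∑ k ∈ Finset.range (n - 2), ((n - 1 - k : ℕ) : ℝ) * X x k * D x (k + 1))
        - X x (n - 2) = 0)
    (hrel : ∀ᶠ x in nhds (0 : Fin (n - 1) → ℝ),
      D x 0 = (-1 : ℝ) ^ (n - 2) * (D x (n - 2)) ^ (n - 1)) :
    False := by
  have hm : n - 2 < n - 1 := by omega
  set i0 : Fin (n - 1) := ⟨n - 2, hm⟩ with hi0
  set e : Fin (n - 1) → ℝ := Pi.single i0 1 with he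
  set c : ℝ → (Fin (n - 1) → ℝ) := fun t => t • e with hc
  have hcc : Continuous c := by fun_prop
  have hc0 : Filter.Tendsto c (nhds 0) (nhds 0) := by
    simpa [hc, zero_smul] using hcc.tendsto 0
  set g : ℝ → ℝ := fun t => fderiv ℝ R (c t) e with hg
  have hgc : ContDiff ℝ (⊤ : ℕ∞) g := by
    have h1 : ContDiff ℝ (⊤ : ℕ∞) (fderiv ℝ R) := hR.fderiv_right (by simp)
    have h2 : ContDiff ℝ (⊤ : ℕ∞) c := contDiff_id.smul contDiff_const
    exact (ContinuousLinearMap.apply ℝ ℝ e).contDiff.comp (h1.comp h2)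
  have hnpos : (0:ℝ) < n := by positivity
  -- key relation along the line
  have key : ∀ᶠ t in nhds (0:ℝ), t / n = (-1:ℝ)^(n-2) * (g t)^(n-1) := by
    filter_upwards [hc0.eventually heq, hc0.eventually hrel] with t h1 h2
    have hsum : ∑ k ∈ Finset.range (n-2), ((n-1-k:ℕ):ℝ) * X (c t) k * D (c t) (k+1) = 0 := by
      apply Finset.sum_eq_zero
      intro k hk
      have hk2 : k < n - 2 := Finset.mem_range.mp hk
      have hk1 : k < n - 1 := by omega
      have hz : X (c t) k = 0 := by
        rw [hX (c t) k hk1]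
        have hne : (⟨k, hk1⟩ : Fin (n-1)) ≠ i0 := by
          simp only [hi0, Fin.ne_iff_vne]; omega
        simp [hc, he, Pi.single_eq_of_ne hne]
      simp [hz]
    have hXt : X (c t) (n-2) = t := by
      rw [hX (c t) (n-2) hm]
      simp [hc, he, hi0]
    rw [hsum, hXt] at h1
    have hD0 : D (c t) 0 = t / n := by
      field_simp
      linarith [h1]
    have hDg : D (c t) (n-2) = g t := hD (c t) (n-2) hm
    rw [hD0, hDg] at h2
    exact h2
  -- g 0 = 0
  have hg0 : g 0 = 0 := by
    have h0 := key.self_of_nhds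
    have : (g 0)^(n-1) = 0 := by
      rcases Nat.even_or_odd (n-2) with hpar | hpar
      · simpa [hpar.neg_one_pow] using h0.symm
      · have : -(g 0)^(n-1) = 0 := by simpa [hpar.neg_one_pow] using h0.symm
        linarith
    exact pow_eq_zero_iff (by omega) |>.mp this
  -- slope tendsto
  have hder : HasDerivAt g (deriv g 0) 0 :=
    ((hgc.differentiable (by simp)) 0).hasDerivAt
  have hslope : Tendsto (fun t => g t / t) (nhdsWithin 0 {(0:ℝ)}ᶜ) (nhds (deriv g 0)) := by
    have := hasDerivAt_iff_tendsto_slope.mp hder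
    refine this.congr' ?_
    filter_upwards [self_mem_nhdsWithin] with t ht
    simp [slope, hg0, div_eq_inv_mul]
  set L := deriv g 0 with hL
  have htend : Tendsto (fun t => |g t / t|^(n-1) * |t|^(n-2)) (nhdsWithin 0 {(0:ℝ)}ᶜ)
      (nhds (|L|^(n-1) * |(0:ℝ)|^(n-2))) := by
    exact (hslope.abs.pow _).mul (((continuous_abs.tendsto 0).pow _).mono_left nhdsWithin_le_nhds)
  have heq2 : (fun t => |g t / t|^(n-1) * |t|^(n-2)) =ᶠ[nhdsWithin 0 {(0:ℝ)}ᶜ]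
      (fun _ => 1 / (n:ℝ)) := by
    filter_upwards [key.filter_mono nhdsWithin_le_nhds, self_mem_nhdsWithin] with t hkey ht
    have htne : |t| ≠ 0 := abs_ne_zero.mpr ht
    have habs : |g t|^(n-1) = |t| / n := by
      have := congrArg abs hkey
      rw [abs_div, abs_mul, abs_pow, abs_neg, abs_one, one_pow, one_mul, abs_pow] at this
      rw [← this, Nat.abs_cast]
    calc |g t / t|^(n-1) * |t|^(n-2)
        = (|g t|^(n-1) / |t|^(n-1)) * |t|^(n-2) := by rw [abs_div, div_pow]
      _ = ((|t|/n) / |t|^(n-1)) * |t|^(n-2) := by rw [habs]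
      _ = 1 / n := by
          rw [show n-1 = (n-2)+1 from by omega, pow_succ]
          field_simp
  have hcontr := tendsto_nhds_unique (htend.congr' heq2) tendsto_const_nhds
  have : |(0:ℝ)|^(n-2) = 0 := by
    rw [abs_zero]
    exact zero_pow (by omega)
  rw [this, mul_zero] at hcontr
  have : (0:ℝ) < 1 / n := by positivity
  linarith [hcontr.symm ▸ this]
end

section
/- For n ≥ 2 and the matrix L(x₁,…,x_{n-1},y) defined by: rows 1 through n-2 of companion type (row i: -xᵢ in column 1, 1 in column i+1), row n-1 equal to (-x_{n-1}, 0, …, 0, ±2y), and row n equal to (-y/2, 0, …, 0), one has: the coefficients of the characteristic polynomial of L are σ₁ = x₁, …, σ_{n-1} = x_{n-1}, and σₙ = ±y², i.e. det(t·Id - L) = tⁿ + x₁t^{n-1} + ⋯ + x_{n-1}t ± y². -/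
/-!
`L` is a companion matrix whose superdiagonal carries the weights `c = (1, …, 1, ε·2y)` and whose
first column is `-(x₁, …, x_{n-1}, y/2)`. For any such weighted companion matrix, expanding
`det (t·1 - L)` along the first row gives
`charpoly L = tⁿ + ∑ₖ aₖ (c₀ ⋯ c_{k-1}) t^{n-1-k}`. Here the weights multiply to `1` in every term
except the last, which is `(y/2)·(ε·2y) = ε·y²`.
-/

open Matrix Polynomial Finset

namespace Matrix

variable {R : Type*} [CommRing R]

def bidiagonalWithFirstColumn (t : R) (a c : ℕ → R) (n : ℕ) : Matrix (Fin n) (Fin n) R :=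
  of fun i j => if (j : ℕ) = 0 then a i else if (j : ℕ) = i + 1 then c i else if j = i then t else 0

def weightedCompanion (a c : ℕ → R) (n : ℕ) : Matrix (Fin n) (Fin n) R :=
  of fun i j => if (j : ℕ) = 0 then -a i else if (j : ℕ) = i + 1 then c i else 0

variable (t : R) (a c : ℕ → R)

theorem det_bidiagonalWithFirstColumn_submatrix_succ_succ (n : ℕ) :
    ((bidiagonalWithFirstColumn t a c (n + 1)).submatrix Fin.succ Fin.succ).det = t ^ n := by
  rw [det_of_isUpperTriangular]
  · simp [bidiagonalWithFirstColumn]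
  · intro i j hji
    have hlt : (j : ℕ) < i := hji
    simp only [bidiagonalWithFirstColumn, submatrix_apply, of_apply, Fin.val_succ, Fin.succ_inj]
    rw [if_neg (by omega), if_neg (by omega), if_neg (by omega)]

theorem bidiagonalWithFirstColumn_submatrix_succ_succAbove_one (n : ℕ) :
    (bidiagonalWithFirstColumn t a c (n + 2)).submatrix Fin.succ (Fin.succAbove 1) =
      bidiagonalWithFirstColumn t (fun k => a (k + 1)) (fun k => c (k + 1)) (n + 1) := by
  ext i j
  rcases Fin.eq_zero_or_eq_succ j with rfl | ⟨j, rfl⟩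
  · simp [bidiagonalWithFirstColumn]
  · simp only [bidiagonalWithFirstColumn, submatrix_apply, of_apply, Fin.one_succAbove_succ,
      Fin.val_succ, Fin.ext_iff]
    split_ifs <;> first | rfl | omega

theorem det_bidiagonalWithFirstColumn (n : ℕ) :
    (bidiagonalWithFirstColumn t a c (n + 1)).det =
      ∑ k ∈ range (n + 1), a k * t ^ (n - k) * ∏ i ∈ range k, -c i := by
  induction n generalizing a c with
  | zero => simp [bidiagonalWithFirstColumn]
  | succ n ih =>
    have hrow : ∀ j : Fin n, bidiagonalWithFirstColumn t a c (n + 2) 0 j.succ.succ = 0 := by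
      simp [bidiagonalWithFirstColumn]
    have h01 : bidiagonalWithFirstColumn t a c (n + 2) 0 1 = c 0 := by
      simp [bidiagonalWithFirstColumn]
    rw [det_succ_row_zero, Fin.sum_univ_succ, Fin.sum_univ_succ,
      sum_eq_zero fun j _ => by rw [hrow, mul_zero, zero_mul], add_zero, Fin.succAbove_zero,
      det_bidiagonalWithFirstColumn_submatrix_succ_succ, Fin.succ_zero_eq_one,
      bidiagonalWithFirstColumn_submatrix_succ_succAbove_one, ih, sum_range_succ' _ (n + 1), mul_sum,
      add_comm]
    congr 1
    · refine sum_congr rfl fun k _ => ?_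
      rw [h01, Fin.val_one, prod_range_succ', Nat.add_sub_add_right]
      ring
    · simp [bidiagonalWithFirstColumn]

theorem charmatrix_weightedCompanion (n : ℕ) :
    charmatrix (weightedCompanion a c n) = bidiagonalWithFirstColumn X
      (fun k => (if k = 0 then X else 0) + C (a k)) (fun k => -C (c k)) n := by
  refine Matrix.ext fun i j => ?_
  simp only [charmatrix_apply, weightedCompanion, bidiagonalWithFirstColumn, of_apply,
    diagonal_apply, Fin.ext_iff]
  split_ifs <;> simp_all

theorem charpoly_weightedCompanion (n : ℕ) :
    (weightedCompanion a c (n + 1)).charpoly =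
      X ^ (n + 1) + ∑ k ∈ range (n + 1), C (a k * ∏ i ∈ range k, c i) * X ^ (n - k) := by
  rw [charpoly, charmatrix_weightedCompanion, det_bidiagonalWithFirstColumn]
  simp only [neg_neg, add_mul, ite_mul, zero_mul, sum_add_distrib, sum_ite_eq', mem_range,
    Nat.zero_lt_succ, if_true, Nat.sub_zero, prod_range_zero, mul_one, ← pow_succ', map_mul, map_prod]
  exact congrArg _ (sum_congr rfl fun k _ => by ring)

end Matrix

theorem stmt9_general (n : ℕ) (hn : 2 ≤ n)
    (ε : ℝ)
    (P : ℕ → ℝ) (y : ℝ)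
    (L : Matrix (Fin n) (Fin n) ℝ)
    (hL : ∀ i j : Fin n, L i j =
      if i.val < n - 2 then
        (if j.val = 0 then -P i.val else if j.val = i.val + 1 then 1 else 0)
      else if i.val = n - 2 then
        (if j.val = 0 then -P (n - 2) else if j.val = n - 1 then ε * (2 * y) else 0)
      else
        (if j.val = 0 then -(y / 2) else 0)) :
    L.charpoly =
      X ^ n + (∑ i ∈ Finset.range (n - 1), C (P i) * X ^ (n - 1 - i)) + C (ε * y ^ 2) := by
  obtain ⟨m, rfl⟩ : ∃ m, n = m + 2 := ⟨n - 2, by omega⟩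
  set a : ℕ → ℝ := fun k => if k = m + 1 then y / 2 else P k
  set c : ℕ → ℝ := fun k => if k = m then ε * (2 * y) else 1
  obtain rfl : L = weightedCompanion a c (m + 2) := by
    ext i j
    have hi := i.isLt
    simp only [hL, weightedCompanion, of_apply, a, c, Nat.add_sub_cancel]
    split_ifs <;> first | rfl | omega | simp_all
  have hc : ∀ k ≤ m, ∏ i ∈ range k, c i = 1 := fun k hk =>
    prod_eq_one fun i hi => if_neg (by simp only [mem_range] at hi; omega)
  have hlow : ∀ k ∈ range (m + 1), a k * ∏ i ∈ range k, c i = P k := fun k hk => by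
    simp only [mem_range] at hk
    simp only [a, hc k (by omega), mul_one, if_neg (show k ≠ m + 1 by omega)]
  have htop : a (m + 1) * ∏ i ∈ range (m + 1), c i = ε * y ^ 2 := by
    rw [prod_range_succ, hc m le_rfl]
    simp only [a, c, if_pos]
    ring
  rw [charpoly_weightedCompanion, sum_range_succ, htop,
    sum_congr rfl fun k hk => congrArg (C · * _) (hlow k hk), Nat.sub_self, pow_zero, mul_one,
    ← add_assoc]
  rfl

/-- The canonical operator of the main theorem has characteristic polynomial
`tⁿ + x₁t^{n-1} + ⋯ + x_{n-1}t + εy²`. -/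
theorem stmt9 (n : ℕ) (hn : 2 ≤ n)
    (ε : ℝ) (hε : ε = 1 ∨ ε = -1)
    (P : ℕ → ℝ) (y : ℝ)
    (L : Matrix (Fin n) (Fin n) ℝ)
    (hL : ∀ i j : Fin n, L i j =
      if i.val < n - 2 then
        (if j.val = 0 then -P i.val else if j.val = i.val + 1 then 1 else 0)
      else if i.val = n - 2 then
        (if j.val = 0 then -P (n - 2) else if j.val = n - 1 then ε * (2 * y) else 0)
      else
        (if j.val = 0 then -(y / 2) else 0)) :
    L.charpoly =
      X ^ n + (∑ i ∈ Finset.range (n - 1), C (P i) * X ^ (n - 1 - i)) + C (ε * y ^ 2) :=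
  stmt9_general n hn ε P y L hL
end

section
/- Let n ≥ 3 and R : ℝ^{n-1} → ℝ smooth satisfying the full system: (i) Σᵢ xᵢRᵢ - R₁R_{n-1} - R = 0 and (ii) R_{k-1} + R_kR_{n-1} = 0 for k = 2,…,n-1, on a neighborhood of 0. Then, on that neighborhood, R_{1,n-1} · [x_{n-1} - 2x_{n-2}R_{n-1} + 3x_{n-3}R_{n-1}² - ⋯ + (n-1)(-1)^{n-2}x₁R_{n-1}^{n-2} + n(-1)^{n-1}R_{n-1}^{n-1}] = 0. -/
open Finset Filter

lemma stmt13_aux_smooth {m : ℕ} (R : (Fin m → ℝ) → ℝ) (hR : ContDiff ℝ (⊤ : ℕ∞) R) (v : Fin m → ℝ) :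
    ContDiff ℝ (⊤ : ℕ∞) (fun x => fderiv ℝ R x v) :=
  (hR.fderiv_right (by simp)).clm_apply contDiff_const

lemma stmt13_key_alg (n : ℕ) (hn : 3 ≤ n) (x Dv D2 : ℕ → ℝ)
    (ha : ∀ k, 2 ≤ k → k ≤ n - 1 → Dv (k-2) + Dv (k-1) * Dv (n-2) = 0)
    (hb : ∀ k, 2 ≤ k → k ≤ n - 1 → D2 (k-2) + (D2 (k-1) * Dv (n-2) + Dv (k-1) * D2 (n-2)) = 0)
    (hc : (∑ i ∈ Finset.range (n-1), x i * D2 i) - (Dv 0 * D2 (n-2) + Dv (n-2) * D2 0) = 0) :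
    D2 (n-2) * ((∑ j ∈ Finset.Icc 1 (n-1), (j:ℝ) * x (n-1-j) * (-1:ℝ)^(j-1) * (Dv (n-2))^(j-1))
      + (n:ℝ) * (-1:ℝ)^(n-1) * (Dv (n-2))^(n-1)) = 0 := by
  set r := Dv (n-2) with hr
  set s := D2 (n-2) with hs
  have claimA : ∀ i, i ≤ n - 2 → Dv (n-2-i) = (-1:ℝ)^i * r^(i+1) := by
    intro i
    induction i with
    | zero => intro _; simp [hr]
    | succ i ih =>
      intro hi
      have hi' : i ≤ n - 2 := by omega
      have h := ha (n-1-i) (by omega) (by omega)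
      have e1 : n-1-i-2 = n-2-(i+1) := by omega
      have e2 : n-1-i-1 = n-2-i := by omega
      rw [e1, e2, ih hi'] at h
      have hv : Dv (n-2-(i+1)) = -((-1:ℝ)^i * r^(i+1) * r) := by linarith
      rw [hv]; ring
  have claimB : ∀ i, i ≤ n - 2 → D2 (n-2-i) = ((i:ℝ)+1) * (-1:ℝ)^i * r^i * s := by
    intro i
    induction i with
    | zero => intro _; simp [hs]
    | succ i ih =>
      intro hi
      have hi' : i ≤ n - 2 := by omega
      have h := hb (n-1-i) (by omega) (by omega)
      have e1 : n-1-i-2 = n-2-(i+1) := by omega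
      have e2 : n-1-i-1 = n-2-i := by omega
      rw [e1, e2, ih hi', claimA i hi'] at h
      have hv : D2 (n-2-(i+1))
          = -(((((i:ℝ)+1) * (-1:ℝ)^i * r^i * s) * r) + ((-1:ℝ)^i * r^(i+1)) * s) := by linarith
      rw [hv]; push_cast; ring
  have hsum : (∑ j ∈ Finset.Icc 1 (n-1), (j:ℝ) * x (n-1-j) * (-1:ℝ)^(j-1) * r^(j-1)) * s
      = ∑ i ∈ Finset.range (n-1), x i * D2 i := by
    rw [Finset.sum_mul]
    refine Finset.sum_nbij' (i := fun j => n-1-j) (j := fun i => n-1-i) ?_ ?_ ?_ ?_ ?_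
    · intro j hj; simp only [Finset.mem_Icc] at hj; simp only [Finset.mem_range]; omega
    · intro i hi; simp only [Finset.mem_range] at hi; simp only [Finset.mem_Icc]; omega
    · intro j hj; simp only [Finset.mem_Icc] at hj; omega
    · intro i hi; simp only [Finset.mem_range] at hi; omega
    · intro j hj
      simp only [Finset.mem_Icc] at hj
      have e1 : n-1-j = n-2-(j-1) := by omega
      have hB := claimB (j-1) (by omega)
      rw [e1, hB]
      have : ((j-1:ℕ):ℝ) + 1 = (j:ℝ) := by
        have : (1:ℕ) ≤ j := hj.1
        push_cast [Nat.cast_sub this]; ring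
      rw [this]; ring
  have h0 : Dv 0 = (-1:ℝ)^(n-2) * r^(n-1) := by
    have h := claimA (n-2) le_rfl
    rw [show n-2-(n-2) = 0 by omega, show n-2+1 = n-1 by omega] at h
    exact h
  have h0' : D2 0 = ((n:ℝ)-1) * (-1:ℝ)^(n-2) * r^(n-2) * s := by
    have h := claimB (n-2) le_rfl
    rw [show n-2-(n-2) = 0 by omega] at h
    rw [h]
    have : ((n-2:ℕ):ℝ) + 1 = (n:ℝ) - 1 := by
      push_cast [Nat.cast_sub (show 2 ≤ n by omega)]; ring
    rw [this]
  have hrp : r^(n-1) = r^(n-2) * r := by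
    rw [show n-1 = (n-2)+1 by omega, pow_succ]
  have hSig : (∑ i ∈ Finset.range (n-1), x i * D2 i) = Dv 0 * s + r * D2 0 := by linarith
  have key : (∑ j ∈ Finset.Icc 1 (n-1), (j:ℝ) * x (n-1-j) * (-1:ℝ)^(j-1) * r^(j-1)) * s
      = (n:ℝ) * (-1:ℝ)^(n-2) * r^(n-1) * s := by
    rw [hsum, hSig, h0, h0', hrp]; ring
  have hpow : (-1:ℝ)^(n-1) = -(-1:ℝ)^(n-2) := by
    rw [show n-1 = (n-2)+1 by omega, pow_succ]; ring
  rw [hpow]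
  linear_combination key

/-- The key factorized identity: differentiating the Euler-type equation with
respect to `x₁` and substituting the cascading relations yields
`R_{1,n-1} · [x_{n-1} - 2x_{n-2}R_{n-1} + ⋯ + (n-1)(-1)^{n-2}x₁R_{n-1}^{n-2}
  + n(-1)^{n-1}R_{n-1}^{n-1}] = 0` near the origin. -/
theorem stmt13 (n : ℕ) (hn : 3 ≤ n)
    (R : (Fin (n - 1) → ℝ) → ℝ) (hR : ContDiff ℝ (⊤ : ℕ∞) R)
    (D : (Fin (n - 1) → ℝ) → ℕ → ℝ)
    (hD : ∀ x k (h : k < n - 1),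
      D x k = fderiv ℝ R x (Pi.single (⟨k, h⟩ : Fin (n - 1)) 1))
    (D2 : (Fin (n - 1) → ℝ) → ℕ → ℕ → ℝ)
    (hD2 : ∀ x a b (ha : a < n - 1) (hb : b < n - 1),
      D2 x a b = fderiv ℝ (fun z => fderiv ℝ R z (Pi.single (⟨b, hb⟩ : Fin (n - 1)) 1)) x
        (Pi.single (⟨a, ha⟩ : Fin (n - 1)) 1))
    (X : (Fin (n - 1) → ℝ) → ℕ → ℝ)
    (hX : ∀ x k (h : k < n - 1), X x k = x ⟨k, h⟩)
    (h1 : ∀ᶠ x in nhds (0 : Fin (n - 1) → ℝ),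
      (∑ i : Fin (n - 1), x i * D x i.val) - D x 0 * D x (n - 2) - R x = 0)
    (h2 : ∀ᶠ x in nhds (0 : Fin (n - 1) → ℝ),
      ∀ k, 2 ≤ k → k ≤ n - 1 → D x (k - 2) + D x (k - 1) * D x (n - 2) = 0) :
    ∀ᶠ x in nhds (0 : Fin (n - 1) → ℝ),
      D2 x 0 (n - 2) *
        ((∑ j ∈ Finset.Icc 1 (n - 1),
            (j : ℝ) * X x (n - 1 - j) * (-1 : ℝ) ^ (j - 1) * (D x (n - 2)) ^ (j - 1))
          + (n : ℝ) * (-1 : ℝ) ^ (n - 1) * (D x (n - 2)) ^ (n - 1)) = 0 := by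
  have hzlt : 0 < n - 1 := by omega
  have hllt : n - 2 < n - 1 := by omega
  set z : Fin (n-1) := ⟨0, hzlt⟩ with hz
  set L : Fin (n-1) := ⟨n-2, hllt⟩ with hL
  set g : Fin (n-1) → ((Fin (n-1) → ℝ) → ℝ) := fun i x => fderiv ℝ R x (Pi.single i 1) with hgdef
  have hgd : ∀ i, Differentiable ℝ (g i) :=
    fun i => (stmt13_aux_smooth R hR _).differentiable (by simp)
  have hRd : Differentiable ℝ R := hR.differentiable (by simp)
  have hDg : ∀ x (i : Fin (n-1)), D x i.val = g i x := fun x i => hD x i.val i.isLt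
  have hD2g : ∀ x (b : Fin (n-1)), D2 x 0 b.val = fderiv ℝ (g b) x (Pi.single z 1) :=
    fun x b => hD2 x 0 b.val hzlt b.isLt
  -- Step 1: differentiate the cascading relations
  have hbstep : ∀ᶠ x in nhds (0 : Fin (n - 1) → ℝ), ∀ k, 2 ≤ k → k ≤ n - 1 →
      D2 x 0 (k-2) + (D2 x 0 (k-1) * D x (n-2) + D x (k-1) * D2 x 0 (n-2)) = 0 := by
    have key : ∀ k ∈ Finset.Icc 2 (n-1), ∀ᶠ x in nhds (0 : Fin (n - 1) → ℝ),
        D2 x 0 (k-2) + (D2 x 0 (k-1) * D x (n-2) + D x (k-1) * D2 x 0 (n-2)) = 0 := by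
      intro k hk
      simp only [Finset.mem_Icc] at hk
      set k2 : Fin (n-1) := ⟨k-2, by omega⟩ with hk2
      set k1 : Fin (n-1) := ⟨k-1, by omega⟩ with hk1
      have hF0 : ∀ᶠ x in nhds (0 : Fin (n-1) → ℝ), g k2 x + g k1 x * g L x = 0 := by
        filter_upwards [h2] with x hx
        have h := hx k hk.1 hk.2
        rwa [show k - 2 = k2.val from rfl, show k - 1 = k1.val from rfl,
          show n - 2 = L.val from rfl, hDg x k2, hDg x k1, hDg x L] at h
      filter_upwards [hF0.eventually_nhds] with x hx
      have hfd : HasFDerivAt (fun y => g k2 y + g k1 y * g L y)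
          (fderiv ℝ (g k2) x + (g k1 x • fderiv ℝ (g L) x + g L x • fderiv ℝ (g k1) x)) x :=
        ((hgd k2 x).hasFDerivAt.add (((hgd k1) x).hasFDerivAt.mul ((hgd L) x).hasFDerivAt))
      have hzero : HasFDerivAt (fun y => g k2 y + g k1 y * g L y)
          (0 : (Fin (n-1) → ℝ) →L[ℝ] ℝ) x :=
        (hasFDerivAt_const (0:ℝ) x).congr_of_eventuallyEq hx
      have huniq := hfd.unique hzero
      have happ := congrArg (fun (T : (Fin (n-1) → ℝ) →L[ℝ] ℝ) => T (Pi.single z 1)) huniq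
      simp only [ContinuousLinearMap.add_apply, ContinuousLinearMap.smul_apply,
        ContinuousLinearMap.zero_apply, smul_eq_mul] at happ
      rw [show (k:ℕ) - 2 = k2.val from rfl, show k - 1 = k1.val from rfl,
        show n - 2 = L.val from rfl, hD2g x k2, hD2g x k1, hD2g x L, hDg x k1, hDg x L]
      linarith [happ]
    have := (Filter.eventually_all_finset (Finset.Icc 2 (n-1))).2 key
    filter_upwards [this] with x hx k hka hkb
    exact hx k (Finset.mem_Icc.mpr ⟨hka, hkb⟩)
  -- Step 2: differentiate the Euler-type relation
  have hcstep : ∀ᶠ x in nhds (0 : Fin (n - 1) → ℝ),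
      (∑ i ∈ Finset.range (n-1), X x i * D2 x 0 i)
        - (D x 0 * D2 x 0 (n-2) + D x (n-2) * D2 x 0 0) = 0 := by
    have hF1 : ∀ᶠ x in nhds (0 : Fin (n-1) → ℝ),
        (∑ i : Fin (n-1), x i * g i x) - g z x * g L x - R x = 0 := by
      filter_upwards [h1] with x hx
      have e : (∑ i : Fin (n-1), x i * D x i.val) = ∑ i : Fin (n-1), x i * g i x :=
        Finset.sum_congr rfl (fun i _ => by rw [hDg x i])
      rwa [e, show D x 0 = g z x from hDg x z, show D x (n-2) = g L x from hDg x L] at hx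
    filter_upwards [hF1.eventually_nhds] with x hx
    have hterm : ∀ i : Fin (n-1), HasFDerivAt (fun y : Fin (n-1) → ℝ => y i * g i y)
        (x i • fderiv ℝ (g i) x + g i x • ContinuousLinearMap.proj i) x :=
      fun i => (ContinuousLinearMap.proj i).hasFDerivAt.mul ((hgd i) x).hasFDerivAt
    have hsum : HasFDerivAt (fun y : Fin (n-1) → ℝ => ∑ i : Fin (n-1), y i * g i y)
        (∑ i : Fin (n-1), (x i • fderiv ℝ (g i) x + g i x • ContinuousLinearMap.proj i)) x :=
      HasFDerivAt.fun_sum (fun i _ => hterm i)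
    have hfd : HasFDerivAt (fun y : Fin (n-1) → ℝ =>
        (∑ i : Fin (n-1), y i * g i y) - g z y * g L y - R y)
        ((∑ i : Fin (n-1), (x i • fderiv ℝ (g i) x + g i x • ContinuousLinearMap.proj i))
          - (g z x • fderiv ℝ (g L) x + g L x • fderiv ℝ (g z) x) - fderiv ℝ R x) x :=
      (hsum.sub (((hgd z) x).hasFDerivAt.mul ((hgd L) x).hasFDerivAt)).sub (hRd x).hasFDerivAt
    have hzero : HasFDerivAt (fun y : Fin (n-1) → ℝ =>
        (∑ i : Fin (n-1), y i * g i y) - g z y * g L y - R y)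
        (0 : (Fin (n-1) → ℝ) →L[ℝ] ℝ) x :=
      (hasFDerivAt_const (0:ℝ) x).congr_of_eventuallyEq hx
    have huniq := hfd.unique hzero
    have happ := congrArg (fun (T : (Fin (n-1) → ℝ) →L[ℝ] ℝ) => T (Pi.single z 1)) huniq
    simp only [ContinuousLinearMap.sub_apply, ContinuousLinearMap.sum_apply,
      ContinuousLinearMap.add_apply, ContinuousLinearMap.smul_apply,
      ContinuousLinearMap.zero_apply, smul_eq_mul, ContinuousLinearMap.proj_apply] at happ
    have hsplit : (∑ i : Fin (n-1), (x i * fderiv ℝ (g i) x (Pi.single z 1)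
          + g i x * (Pi.single z 1 : Fin (n-1) → ℝ) i))
        = (∑ i : Fin (n-1), x i * fderiv ℝ (g i) x (Pi.single z 1)) + g z x := by
      rw [Finset.sum_add_distrib]
      congr 1
      simp [Pi.single_apply]
    rw [hsplit] at happ
    have hRe0 : fderiv ℝ R x (Pi.single z 1) = g z x := rfl
    rw [hRe0] at happ
    have hs2 : (∑ i : Fin (n-1), x i * fderiv ℝ (g i) x (Pi.single z 1))
        = ∑ i ∈ Finset.range (n-1), X x i * D2 x 0 i := by
      rw [← Fin.sum_univ_eq_sum_range (fun j => X x j * D2 x 0 j) (n-1)]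
      refine Finset.sum_congr rfl (fun i _ => ?_)
      rw [hX x i.val i.isLt, hD2g x i]
    rw [show D x 0 = g z x from hDg x z, show D x (n-2) = g L x from hDg x L,
      show D2 x 0 (n-2) = fderiv ℝ (g L) x (Pi.single z 1) from hD2g x L,
      show D2 x 0 0 = fderiv ℝ (g z) x (Pi.single z 1) from hD2g x z]
    linarith [happ, hs2]
  -- Combine
  filter_upwards [h2, hbstep, hcstep] with x hx2 hxb hxc
  exact stmt13_key_alg n hn (X x) (D x) (D2 x 0) hx2 hxb hxc
end

section
/- For n ≥ 2, let L be the matrix whose row i (1 ≤ i ≤ n-2) has -xᵢ in column 1 and 1 in column i+1 (zeros elsewhere), whose row n-1 is (-x_{n-1}, 0,…,0, 2y), and whose row n is (-y/2, 0,…,0); let J be the identity matrix except that its last row is (0,…,0,2y) (the Jacobian of (x₁,…,x_{n-1}, y²)); and let L̃ be the companion matrix with first column (-x₁,…,-x_{n-1},-y²) and ones on the superdiagonal. Then J·L = L̃·J holds identically in (x₁,…,x_{n-1},y). -/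
open Matrix

/-- For `f = y²`, the canonical operator `L` of the main theorem satisfies
`J·L = L̃·J` identically in `(x₁,…,x_{n-1},y)`, where `J` is the Jacobian of
`(x₁,…,x_{n-1},y²)` and `L̃` is the companion matrix. -/
theorem stmt14 (n : ℕ) (hn : 2 ≤ n)
    (P : ℕ → ℝ) (y : ℝ)
    (L J Lt : Matrix (Fin n) (Fin n) ℝ)
    (hL : ∀ i j : Fin n, L i j =
      if i.val < n - 2 then
        (if j.val = 0 then -P i.val else if j.val = i.val + 1 then 1 else 0)
      else if i.val = n - 2 then
        (if j.val = 0 then -P (n - 2) else if j.val = n - 1 then 2 * y else 0)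
      else
        (if j.val = 0 then -(y / 2) else 0))
    (hJ : ∀ i j : Fin n, J i j =
      if i.val < n - 1 then (if i = j then 1 else 0)
      else (if j.val = n - 1 then 2 * y else 0))
    (hLt : ∀ i j : Fin n, Lt i j =
      if j.val = 0 then (if i.val < n - 1 then -P i.val else -(y ^ 2))
      else if j.val = i.val + 1 then 1 else 0) :
    J * L = Lt * J := by
  have hn1 : n - 1 < n := by omega
  set e : Fin n := ⟨n - 1, hn1⟩ with he
  ext i j
  rw [mul_apply, mul_apply]
  -- compute LHS
  have hLHS : ∑ k, J i k * L k j =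
      if i.val < n - 1 then L i j else 2 * y * L e j := by
    by_cases hi : i.val < n - 1
    · rw [if_pos hi, Finset.sum_eq_single i]
      · rw [hJ]; simp [hi]
      · intro k _ hk
        rw [hJ, if_pos hi, if_neg (by exact fun h => hk h.symm), zero_mul]
      · intro h; exact absurd (Finset.mem_univ i) h
    · rw [if_neg hi, Finset.sum_eq_single e]
      · rw [hJ, if_neg hi, if_pos rfl]
      · intro k _ hk
        rw [hJ, if_neg hi, if_neg, zero_mul]
        intro h; apply hk; exact Fin.ext h
      · intro h; exact absurd (Finset.mem_univ e) h
  -- compute RHS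
  have hRHS : ∑ k, Lt i k * J k j =
      if j.val = n - 1 then Lt i e * (2 * y) else Lt i j := by
    by_cases hj : j.val = n - 1
    · rw [if_pos hj, Finset.sum_eq_single e]
      · rw [hJ]; simp [he, hj]
      · intro k _ hk
        have hk' : k.val < n - 1 := by
          rcases lt_or_ge k.val (n-1) with h | h
          · exact h
          · exact absurd (Fin.ext (by omega : k.val = n - 1)) hk
        rw [hJ, if_pos hk', if_neg, mul_zero]
        intro h; apply hk; apply Fin.ext; rw [← h] at hj; omega
      · intro h; exact absurd (Finset.mem_univ e) h
    · rw [if_neg hj, Finset.sum_eq_single j]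
      · rw [hJ]
        have := j.isLt
        have hj' : j.val < n - 1 := by omega
        simp [hj']
      · intro k _ hk
        rw [hJ]
        by_cases hk' : k.val < n - 1
        · rw [if_pos hk', if_neg hk, mul_zero]
        · rw [if_neg hk', if_neg hj, mul_zero]
      · intro h; exact absurd (Finset.mem_univ j) h
  rw [hLHS, hRHS]
  -- now a pointwise check
  have hiv : i.val < n := i.isLt
  have hjv : j.val < n := j.isLt
  by_cases hi : i.val < n - 1
  · rw [if_pos hi]
    by_cases hj : j.val = n - 1
    · rw [if_pos hj, hL, hLt]
      have hev : e.val = n - 1 := rfl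
      by_cases hi2 : i.val < n - 2
      · rw [if_pos hi2]
        rw [if_neg (by omega : ¬ j.val = 0), if_neg (by omega : ¬ j.val = i.val + 1)]
        rw [if_neg (by omega : ¬ e.val = 0), if_neg (by omega : ¬ e.val = i.val + 1)]
        ring
      · have hi3 : i.val = n - 2 := by omega
        rw [if_neg hi2, if_pos hi3]
        rw [if_neg (by omega : ¬ j.val = 0), if_pos hj]
        rw [if_neg (by omega : ¬ e.val = 0), if_pos (by omega : e.val = i.val + 1)]
        ring
    · rw [if_neg hj, hL, hLt]
      by_cases hi2 : i.val < n - 2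
      · rw [if_pos hi2]
        by_cases hj0 : j.val = 0
        · rw [if_pos hj0, if_pos hj0, if_pos hi]
        · rw [if_neg hj0, if_neg hj0]
      · have hi3 : i.val = n - 2 := by omega
        rw [if_neg hi2, if_pos hi3]
        by_cases hj0 : j.val = 0
        · rw [if_pos hj0, if_pos hj0, if_pos hi, hi3]
        · rw [if_neg hj0, if_neg hj0, if_neg (by omega : ¬ j.val = n - 1),
            if_neg (by omega : ¬ j.val = i.val + 1)]
  · have hi' : i.val = n - 1 := by omega
    rw [if_neg hi, hL e j, hLt i e, hLt i j]
    have hev : e.val = n - 1 := rfl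
    rw [if_neg (by omega : ¬ e.val < n - 2), if_neg (by omega : ¬ e.val = n - 2)]
    by_cases hj : j.val = n - 1
    · rw [if_pos hj, if_neg (by omega : ¬ e.val = 0),
        if_neg (by omega : ¬ e.val = i.val + 1)]
      rw [if_neg (by omega : ¬ j.val = 0)]
      ring
    · rw [if_neg hj]
      by_cases hj0 : j.val = 0
      · rw [if_pos hj0, if_pos hj0, if_neg (by omega : ¬ i.val < n - 1)]
        ring
      · rw [if_neg hj0, if_neg hj0, if_neg (by omega : ¬ j.val = i.val + 1)]
        ring
end
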